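/- arXiv:2008.01038 — 2 statements merged into one kernel-verified Lean document; each statement's English description precedes it below -/
import Mathlib

section
/- Let η > 0, ε > 0, N ∈ ℕ, and let p, p̃ : Fin N → ℝ satisfy |p̃ k - p k| ≤ 2η for all k. Assume that for every x ∈ ℝ, the number of indices k with x - 4η ≤ p k ≤ x + 4η is at most ε·N. Define the rank functions R_p r = |{k : p k ≤ p r}| and R_{p̃} r = |{k : p̃ k ≤ p̃ r}|. Then for every index r, |R_{p̃} r - R_p r| ≤ 5 ε N. -/
/-!
A perturbation of size at most `2η` cannot change the order of `p k` and `p r` unless the two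
values are within `4η` of each other. So the two rank sets `{k | p̃ k ≤ p̃ r}` and
`{k | p k ≤ p r}` agree outside the window `[p r - 4η, p r + 4η]`, and their cardinalities differ
by at most the `εN` entries inside it.
-/

open scoped Classical

open Finset

theorem le_iff_le_of_abs_sub_le {α : Type*} [Field α] [LinearOrder α] [IsStrictOrderedRing α]
    {a b a' b' δ δ' : α} (ha : |a' - a| ≤ δ) (hb : |b' - b| ≤ δ') (hab : δ + δ' < |a - b|) :
    a' ≤ b' ↔ a ≤ b := by
  rw [abs_le] at ha hb
  rcases lt_abs.mp hab with hab | hab <;> constructor <;> intro h <;> linarith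

section CardFilter

variable {ι : Type*} (s : Finset ι) (P Q W : ι → Prop)
  [DecidablePred P] [DecidablePred Q] [DecidablePred W]

theorem card_filter_le_card_filter_add_card_filter (h : ∀ k ∈ s, P k → Q k ∨ W k) :
    #(s.filter P) ≤ #(s.filter Q) + #(s.filter W) :=
  calc #(s.filter P) ≤ #(s.filter Q ∪ s.filter W) := by
        rw [← filter_or]
        exact card_le_card fun k hk => by
          simp only [mem_filter] at hk ⊢
          exact ⟨hk.1, h k hk.1 hk.2⟩
    _ ≤ #(s.filter Q) + #(s.filter W) := card_union_le _ _

theorem abs_card_filter_sub_card_filter_le {R : Type*} [Ring R] [LinearOrder R] [IsOrderedRing R]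
    (h : ∀ k ∈ s, ¬ W k → (P k ↔ Q k)) :
    |(#(s.filter P) : R) - #(s.filter Q)| ≤ #(s.filter W) := by
  have hPQ := card_filter_le_card_filter_add_card_filter s P Q W fun k hk hP =>
    or_iff_not_imp_right.mpr fun hW => (h k hk hW).mp hP
  have hQP := card_filter_le_card_filter_add_card_filter s Q P W fun k hk hQ =>
    or_iff_not_imp_right.mpr fun hW => (h k hk hW).mpr hQ
  rw [abs_sub_le_iff, sub_le_iff_le_add', sub_le_iff_le_add']
  exact ⟨(Nat.mono_cast hPQ).trans_eq (Nat.cast_add _ _),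
    (Nat.mono_cast hQP).trans_eq (Nat.cast_add _ _)⟩

end CardFilter

theorem rank_perturbation_bound_general
    {N : ℕ} (η ε : ℝ)
    (p ptilde : Fin N → ℝ)
    (hclose : ∀ k, |ptilde k - p k| ≤ 2 * η)
    (hwindow : ∀ x : ℝ,
      ((Finset.univ.filter (fun k => x - 4 * η ≤ p k ∧ p k ≤ x + 4 * η)).card : ℝ)
        ≤ ε * N) :
    ∀ r : Fin N,
      |((Finset.univ.filter (fun k => ptilde k ≤ ptilde r)).card : ℝ)
        - ((Finset.univ.filter (fun k => p k ≤ p r)).card : ℝ)| ≤ 5 * ε * N := by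
  intro r
  have hrank_stable : ∀ k ∈ univ, ¬ (p r - 4 * η ≤ p k ∧ p k ≤ p r + 4 * η) →
      (ptilde k ≤ ptilde r ↔ p k ≤ p r) := fun k _ hk =>
    le_iff_le_of_abs_sub_le (hclose k) (hclose r) <| by
      rw [← not_le, abs_le]
      contrapose! hk
      constructor <;> linarith [hk.1, hk.2]
  have hεN : 0 ≤ ε * N := (Nat.cast_nonneg _).trans (hwindow (p r))
  calc _ ≤ (#(univ.filter fun k => p r - 4 * η ≤ p k ∧ p k ≤ p r + 4 * η) : ℝ) :=
        abs_card_filter_sub_card_filter_le _ _ _ _ hrank_stable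
    _ ≤ ε * N := hwindow (p r)
    _ ≤ 5 * ε * N := by linarith

/-- Deterministic rank-perturbation bound: if each entry is perturbed by at most `2η`
and no window `[x - 4η, x + 4η]` contains more than `εN` entries of the original
sequence, then every rank changes by at most `5εN`. -/
theorem rank_perturbation_bound
    {N : ℕ} (η ε : ℝ) (hη : 0 < η) (hε : 0 < ε)
    (p ptilde : Fin N → ℝ)
    (hclose : ∀ k, |ptilde k - p k| ≤ 2 * η)
    (hwindow : ∀ x : ℝ,
      ((Finset.univ.filter (fun k => x - 4 * η ≤ p k ∧ p k ≤ x + 4 * η)).card : ℝ)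
        ≤ ε * N) :
    ∀ r : Fin N,
      |((Finset.univ.filter (fun k => ptilde k ≤ ptilde r)).card : ℝ)
        - ((Finset.univ.filter (fun k => p k ≤ p r)).card : ℝ)| ≤ 5 * ε * N :=
  rank_perturbation_bound_general η ε p ptilde hclose hwindow
end

section
/- Let N ∈ ℕ with N ≥ 1, M > 0, ε > 0, and let R, R̃ : Fin N → ℝ satisfy 0 ≤ R k ≤ M and |R̃ k - R k| ≤ ε·M for all k. Define σ²(R) = (1/N) ∑ k (R k - (1/N) ∑ l R l)². Then |σ²(R̃) - σ²(R)| ≤ M² (4ε + 2ε²). -/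
/-- The (biased) sample variance of a finite sequence. -/
noncomputable def sampleVar {N : ℕ} (R : Fin N → ℝ) : ℝ :=
  (∑ k, (R k - (∑ l, R l) / N) ^ 2) / N

noncomputable def sampleMean {N : ℕ} (a : Fin N → ℝ) : ℝ :=
  (∑ k, a k) / N

section SampleMean

variable {N : ℕ} (a b : Fin N → ℝ)

theorem sampleMean_add : sampleMean (fun k => a k + b k) = sampleMean a + sampleMean b := by
  simp only [sampleMean, Finset.sum_add_distrib, add_div]

theorem sampleMean_sub : sampleMean (fun k => a k - b k) = sampleMean a - sampleMean b := by
  simp only [sampleMean, Finset.sum_sub_distrib, sub_div]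

theorem abs_sampleMean_le {c : ℝ} (hc : 0 ≤ c) (h : ∀ k, |a k| ≤ c) : |sampleMean a| ≤ c := by
  rcases N.eq_zero_or_pos with rfl | hN
  · simpa [sampleMean] using hc
  have hN' : (0 : ℝ) < N := Nat.cast_pos.mpr hN
  rw [sampleMean, abs_div, Nat.abs_cast, div_le_iff₀ hN']
  calc |∑ k, a k| ≤ ∑ k, |a k| := Finset.abs_sum_le_sum_abs _ _
    _ ≤ ∑ _k : Fin N, c := Finset.sum_le_sum fun k _ => h k
    _ = c * N := by simp [mul_comm]

theorem sampleVar_eq_sampleMean_sq_sub_sq :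
    sampleVar a = sampleMean (fun k => a k ^ 2) - sampleMean a ^ 2 := by
  rcases N.eq_zero_or_pos with rfl | hN
  · simp [sampleVar, sampleMean]
  have hN' : (N : ℝ) ≠ 0 := by positivity
  simp only [sampleVar, sampleMean, sub_sq, Finset.sum_add_distrib, Finset.sum_sub_distrib,
    ← Finset.sum_mul, ← Finset.mul_sum, Finset.sum_const, Finset.card_univ, Fintype.card_fin,
    nsmul_eq_mul]
  field_simp
  ring

end SampleMean

theorem abs_sq_sub_sq_le {x y δ s : ℝ} (hδ : |x - y| ≤ δ) (hs : |x + y| ≤ s) :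
    |x ^ 2 - y ^ 2| ≤ δ * s := by
  rw [sq_sub_sq, abs_mul, mul_comm δ]
  exact mul_le_mul hs hδ (abs_nonneg _) ((abs_nonneg _).trans hs)

/-- `σ²(a) - σ²(b) = mean (a² - b²) - ((mean a)² - (mean b)²)`, and both terms are differences of
squares `(x - y)(x + y)` whose factors are controlled by `δ` and `s`. -/
theorem abs_sampleVar_sub_le {N : ℕ} {a b : Fin N → ℝ} {δ s : ℝ} (hδ₀ : 0 ≤ δ) (hs₀ : 0 ≤ s)
    (hδ : ∀ k, |a k - b k| ≤ δ) (hs : ∀ k, |a k + b k| ≤ s) :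
    |sampleVar a - sampleVar b| ≤ 2 * δ * s := by
  have hsq : |sampleMean (fun k => a k ^ 2) - sampleMean (fun k => b k ^ 2)| ≤ δ * s := by
    rw [← sampleMean_sub]
    exact abs_sampleMean_le _ (mul_nonneg hδ₀ hs₀) fun k => abs_sq_sub_sq_le (hδ k) (hs k)
  have hmean : |sampleMean a ^ 2 - sampleMean b ^ 2| ≤ δ * s := by
    refine abs_sq_sub_sq_le ?_ ?_
    · rw [← sampleMean_sub]; exact abs_sampleMean_le _ hδ₀ hδ
    · rw [← sampleMean_add]; exact abs_sampleMean_le _ hs₀ hs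
  rw [sampleVar_eq_sampleMean_sq_sub_sq, sampleVar_eq_sampleMean_sq_sub_sq]
  calc _ = |(sampleMean (fun k => a k ^ 2) - sampleMean (fun k => b k ^ 2))
          - (sampleMean a ^ 2 - sampleMean b ^ 2)| := by ring_nf
    _ ≤ δ * s + δ * s := (abs_sub _ _).trans (add_le_add hsq hmean)
    _ = 2 * δ * s := by ring

theorem sample_variance_perturbation_bound_general
    {N : ℕ} (hN : 1 ≤ N) (M ε : ℝ)
    (R Rt : Fin N → ℝ)
    (hR : ∀ k, 0 ≤ R k ∧ R k ≤ M)
    (hRt : ∀ k, |Rt k - R k| ≤ ε * M) :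
    |sampleVar Rt - sampleVar R| ≤ M ^ 2 * (4 * ε + 2 * ε ^ 2) := by
  have k₀ : Fin N := ⟨0, hN⟩
  have hM : 0 ≤ M := (hR k₀).1.trans (hR k₀).2
  have hεM : 0 ≤ ε * M := (abs_nonneg _).trans (hRt k₀)
  have hsum : ∀ k, |Rt k + R k| ≤ 2 * M + ε * M := fun k => by
    have := abs_le.mp (hRt k)
    have := hR k
    exact abs_le.mpr ⟨by linarith, by linarith⟩
  calc |sampleVar Rt - sampleVar R| ≤ 2 * (ε * M) * (2 * M + ε * M) :=
        abs_sampleVar_sub_le hεM (by positivity) hRt hsum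
    _ = M ^ 2 * (4 * ε + 2 * ε ^ 2) := by ring

/-- An entrywise perturbation of a sequence bounded by `M` by at most `εM` perturbs its
sample variance by at most `M²(4ε + 2ε²)`. -/
theorem sample_variance_perturbation_bound
    {N : ℕ} (hN : 1 ≤ N) (M ε : ℝ) (hM : 0 < M) (hε : 0 < ε)
    (R Rt : Fin N → ℝ)
    (hR : ∀ k, 0 ≤ R k ∧ R k ≤ M)
    (hRt : ∀ k, |Rt k - R k| ≤ ε * M) :
    |sampleVar Rt - sampleVar R| ≤ M ^ 2 * (4 * ε + 2 * ε ^ 2) :=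
  sample_variance_perturbation_bound_general hN M ε R Rt hR hRt
end
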